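/- arXiv:2101.03650 — 4 statements merged into one kernel-verified Lean document; each statement's English description precedes it below -/
import Mathlib

section
/- Let α_B, α_E, λ_B, λ_E be positive reals with α_B ≥ α_E and λ_E/α_E ≥ λ_B/α_B, where at least one of these inequalities is strict. Define Π(x) = (α_B - α_E)x + λ_E·log(1 + α_E·x/λ_E) - λ_B·log(1 + α_B·x/λ_B). Then Π is strictly increasing on (0, ∞), i.e., Π(x) > 0 for all x > 0. -/
/-!
Writing `D a l x = a x - l log (1 + a x / l)`, one has `Π = D α_B λ_B - D α_E λ_E` and
`D' a l x = a² x / (l + a x) = x / (l / a² + x / a)`. The degradedness conditions give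
`λ_B / α_B² ≤ λ_E / α_E²` and `1 / α_B ≤ 1 / α_E`, one of them strictly, so `Π' > 0` on `(0, ∞)`;
since `Π 0 = 0`, `Π` is positive there.
-/

open Real Set

noncomputable def logDefect (a l x : ℝ) : ℝ := a * x - l * log (1 + a * x / l)

lemma logDefect_zero (a l : ℝ) : logDefect a l 0 = 0 := by
  simp [logDefect]

lemma hasDerivAt_logDefect {a l x : ℝ} (ha : 0 ≤ a) (hl : 0 < l) (hx : 0 ≤ x) :
    HasDerivAt (logDefect a l) (a ^ 2 * x / (l + a * x)) x := by
  have hinner : HasDerivAt (fun y => 1 + a * y / l) (a / l) x := by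
    simpa using (((hasDerivAt_id x).const_mul a).div_const l).const_add 1
  have hpos : 0 < 1 + a * x / l := by positivity
  have hderiv := ((hasDerivAt_id x).const_mul a).sub ((hinner.log hpos.ne').const_mul l)
  refine hderiv.congr_deriv ?_
  have : l + a * x ≠ 0 := by positivity
  rw [one_add_div hl.ne', div_div_div_cancel_right₀ hl.ne']
  field_simp
  ring

lemma deriv_logDefect_lt {aB aE lB lE x : ℝ} (haB : 0 < aB) (haE : 0 < aE) (hlB : 0 < lB)
    (hlE : 0 < lE) (h1 : aE ≤ aB) (h2 : lB / aB ≤ lE / aE)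
    (hstrict : aE < aB ∨ lB / aB < lE / aE) (hx : 0 < x) :
    aE ^ 2 * x / (lE + aE * x) < aB ^ 2 * x / (lB + aB * x) := by
  rw [div_lt_div_iff₀ (by positivity) (by positivity)]
  rw [div_le_div_iff₀ haB haE] at h2
  have hlin : aE ^ 2 * lB ≤ aB ^ 2 * lE := by nlinarith [mul_le_mul_of_nonneg_left h1 haE.le]
  have hquad : aE ^ 2 * aB ≤ aB ^ 2 * aE := by
    nlinarith [mul_le_mul_of_nonneg_left h1 (mul_pos haE haB).le]
  suffices aE ^ 2 * lB + aE ^ 2 * aB * x < aB ^ 2 * lE + aB ^ 2 * aE * x by nlinarith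
  rcases hstrict with h | h
  · have : aE ^ 2 * aB < aB ^ 2 * aE := by nlinarith [mul_lt_mul_of_pos_left h (mul_pos haE haB)]
    nlinarith
  · rw [div_lt_div_iff₀ haB haE] at h
    have : aE ^ 2 * lB < aB ^ 2 * lE := by nlinarith [mul_le_mul_of_nonneg_left h1 haE.le]
    nlinarith

lemma strictMonoOn_logDefect_sub {aB aE lB lE : ℝ} (haB : 0 < aB) (haE : 0 < aE) (hlB : 0 < lB)
    (hlE : 0 < lE) (h1 : aE ≤ aB) (h2 : lB / aB ≤ lE / aE)
    (hstrict : aE < aB ∨ lB / aB < lE / aE) :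
    StrictMonoOn (fun x => logDefect aB lB x - logDefect aE lE x) (Ici 0) := by
  have hderiv (x : ℝ) (hx : 0 ≤ x) :
      HasDerivAt (fun x => logDefect aB lB x - logDefect aE lE x)
        (aB ^ 2 * x / (lB + aB * x) - aE ^ 2 * x / (lE + aE * x)) x :=
    (hasDerivAt_logDefect haB.le hlB hx).sub (hasDerivAt_logDefect haE.le hlE hx)
  refine strictMonoOn_of_deriv_pos (convex_Ici 0)
    (fun x hx => (hderiv x hx).continuousAt.continuousWithinAt) fun x hx => ?_
  rw [interior_Ici] at hx
  rw [(hderiv x (le_of_lt hx)).deriv, sub_pos]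
  exact deriv_logDefect_lt haB haE hlB hlE h1 h2 hstrict hx

/-- Π(x) = (α_B - α_E)x + λ_E·log(1 + α_E x/λ_E) - λ_B·log(1 + α_B x/λ_B)
is strictly increasing on (0,∞) (from 0), i.e. Π(x) > 0 for all x > 0. -/
theorem stmt0 (aB aE lB lE : ℝ) (haB : 0 < aB) (haE : 0 < aE) (hlB : 0 < lB)
    (hlE : 0 < lE) (h1 : aE ≤ aB) (h2 : lB / aB ≤ lE / aE)
    (hstrict : aE < aB ∨ lB / aB < lE / aE) :
    StrictMonoOn (fun x : ℝ => (aB - aE) * x + lE * Real.log (1 + aE * x / lE)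
      - lB * Real.log (1 + aB * x / lB)) (Set.Ici 0) ∧
    ∀ x : ℝ, 0 < x →
      0 < (aB - aE) * x + lE * Real.log (1 + aE * x / lE)
        - lB * Real.log (1 + aB * x / lB) := by
  have hfun (x : ℝ) : (aB - aE) * x + lE * Real.log (1 + aE * x / lE)
      - lB * Real.log (1 + aB * x / lB) = logDefect aB lB x - logDefect aE lE x := by
    unfold logDefect
    ring
  have hmono := strictMonoOn_logDefect_sub haB haE hlB hlE h1 h2 hstrict
  refine ⟨by simpa only [hfun] using hmono, fun x hx => ?_⟩
  rw [hfun]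
  simpa only [logDefect_zero, sub_zero, sub_pos] using hmono self_mem_Ici (mem_Ici.2 hx.le) hx
end

section
/- Let α_B, α_E, λ_B, λ_E be positive reals with α_B ≥ α_E and λ_E/α_E ≥ λ_B/α_B, at least one inequality strict. Define Φ(x) = (α_E - α_B) + (α_B + λ_B/x)·log(1 + α_B·x/λ_B) - (α_E + λ_E/x)·log(1 + α_E·x/λ_E) for x > 0. Then the derivative Φ'(x) = [(α_B - α_E)x + λ_E·log(1 + α_E x/λ_E) - λ_B·log(1 + α_B x/λ_B)]/x² is strictly positive for all x > 0, so Φ is strictly increasing on (0, ∞). -/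
/-!
Write `q s = log (1 + s) / s`, the slope of the secant of `log` through `1` and `1 + s`. With
`s_B = α_B x / λ_B` and `s_E = α_E x / λ_E`, the numerator of `Φ'` is
`x (α_B (1 - q s_B) - α_E (1 - q s_E))`. Strict concavity of `log` makes `q` strictly decreasing
with `q < 1`, and degradedness says exactly `α_E ≤ α_B` and `s_E ≤ s_B`, so
`0 < 1 - q s_E ≤ 1 - q s_B`, with strictness from whichever degradedness inequality is strict.
-/

open Real Set

lemma log_one_add_div_self_lt_one {s : ℝ} (hs : 0 < s) : log (1 + s) / s < 1 := by
  rw [div_lt_one hs]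
  linarith [log_lt_sub_one_of_pos (by linarith : 0 < 1 + s) (by linarith : 1 + s ≠ 1)]

lemma strictAntiOn_log_one_add_div_self :
    StrictAntiOn (fun s : ℝ => log (1 + s) / s) (Ioi 0) := by
  intro s (hs : 0 < s) t (ht : 0 < t) hst
  have h := strictConcaveOn_log_Ioi.secant_strict_mono (a := 1) (x := 1 + s) (y := 1 + t)
    (mem_Ioi.2 one_pos) (by simp only [mem_Ioi]; linarith) (by simp only [mem_Ioi]; linarith)
    (by linarith) (by linarith) (by linarith)
  simpa only [log_one, sub_zero, add_sub_cancel_left] using h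

lemma mul_one_sub_log_one_add_div_self_lt {aB aE sB sE : ℝ} (haE : 0 < aE) (hsE : 0 < sE)
    (ha : aE ≤ aB) (hs : sE ≤ sB) (hstrict : aE < aB ∨ sE < sB) :
    aE * (1 - log (1 + sE) / sE) < aB * (1 - log (1 + sB) / sB) := by
  have hE : 0 < 1 - log (1 + sE) / sE := by linarith [log_one_add_div_self_lt_one hsE]
  rcases hstrict with ha' | hs'
  · have hEB : 1 - log (1 + sE) / sE ≤ 1 - log (1 + sB) / sB := by
      linarith [strictAntiOn_log_one_add_div_self.antitoneOn hsE (hsE.trans_le hs : 0 < sB) hs]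
    calc aE * (1 - log (1 + sE) / sE) < aB * (1 - log (1 + sE) / sE) :=
          mul_lt_mul_of_pos_right ha' hE
      _ ≤ aB * (1 - log (1 + sB) / sB) := mul_le_mul_of_nonneg_left hEB (haE.trans ha').le
  · have hEB : 1 - log (1 + sE) / sE < 1 - log (1 + sB) / sB := by
      linarith [strictAntiOn_log_one_add_div_self hsE (hsE.trans hs') hs']
    calc aE * (1 - log (1 + sE) / sE) ≤ aB * (1 - log (1 + sE) / sE) :=
          mul_le_mul_of_nonneg_right ha hE.le
      _ < aB * (1 - log (1 + sB) / sB) := mul_lt_mul_of_pos_left hEB (haE.trans_le ha)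

lemma hasDerivAt_add_div_mul_log_one_add {a l x : ℝ} (hl : l ≠ 0) (hx : x ≠ 0)
    (harg : 1 + a * x / l ≠ 0) :
    HasDerivAt (fun x : ℝ => (a + l / x) * log (1 + a * x / l))
      (a / x - l / x ^ 2 * log (1 + a * x / l)) x := by
  have hf : HasDerivAt (fun x : ℝ => a + l / x) (-(l / x ^ 2)) x := by
    simpa [div_eq_mul_inv] using ((hasDerivAt_inv hx).const_mul l).const_add a
  have hg : HasDerivAt (fun x : ℝ => 1 + a * x / l) (a / l) x := by
    simpa using ((hasDerivAt_id x).const_mul a |>.div_const l).const_add 1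
  have harg' : l + a * x ≠ 0 := by
    rwa [one_add_div hl, div_ne_zero_iff, and_iff_left hl] at harg
  refine (hf.mul (hg.log harg)).congr_deriv ?_
  rw [mul_comm a x] at harg' ⊢
  field_simp
  ring

lemma secrecy_numerator_pos {aB aE lB lE x : ℝ} (haE : 0 < aE) (hlB : 0 < lB)
    (hlE : 0 < lE) (hx : 0 < x) (ha : aE ≤ aB) (hl : lB / aB ≤ lE / aE)
    (hstrict : aE < aB ∨ lB / aB < lE / aE) :
    0 < (aB - aE) * x + lE * log (1 + aE * x / lE) - lB * log (1 + aB * x / lB) := by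
  have haB := haE.trans_le ha
  have hratio (a l : ℝ) : a * x / l = x / (l / a) := by rw [div_div_eq_mul_div, mul_comm]
  have key := mul_one_sub_log_one_add_div_self_lt (sB := aB * x / lB) (sE := aE * x / lE) haE
    (by positivity) ha (by rw [hratio, hratio]; gcongr)
    (by rw [hratio, hratio]; exact hstrict.imp_right fun h => by gcongr)
  have hnum : (aB - aE) * x + lE * log (1 + aE * x / lE) - lB * log (1 + aB * x / lB)
      = x * (aB * (1 - log (1 + aB * x / lB) / (aB * x / lB))
        - aE * (1 - log (1 + aE * x / lE) / (aE * x / lE))) := by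
    field_simp
    ring
  rw [hnum]
  exact mul_pos hx (sub_pos.2 key)

lemma hasDerivAt_secrecy_rate {aB aE lB lE x : ℝ} (hlB : lB ≠ 0) (hlE : lE ≠ 0) (hx : x ≠ 0)
    (hargB : 1 + aB * x / lB ≠ 0) (hargE : 1 + aE * x / lE ≠ 0) :
    HasDerivAt (fun x : ℝ => (aE - aB) + (aB + lB / x) * log (1 + aB * x / lB)
        - (aE + lE / x) * log (1 + aE * x / lE))
      (((aB - aE) * x + lE * log (1 + aE * x / lE) - lB * log (1 + aB * x / lB)) / x ^ 2) x := by
  have hB := hasDerivAt_add_div_mul_log_one_add hlB hx hargB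
  have hE := hasDerivAt_add_div_mul_log_one_add hlE hx hargE
  refine ((hB.const_add (aE - aB)).sub hE).congr_deriv ?_
  field_simp
  ring

/-- Φ has derivative Π(x)/x² at every x > 0, this derivative is
strictly positive, and Φ is strictly increasing on (0,∞). -/
theorem stmt1 (aB aE lB lE : ℝ) (haB : 0 < aB) (haE : 0 < aE) (hlB : 0 < lB)
    (hlE : 0 < lE) (h1 : aE ≤ aB) (h2 : lB / aB ≤ lE / aE)
    (hstrict : aE < aB ∨ lB / aB < lE / aE) :
    (∀ x : ℝ, 0 < x →
      HasDerivAt (fun x : ℝ => (aE - aB) + (aB + lB / x) * Real.log (1 + aB * x / lB)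
          - (aE + lE / x) * Real.log (1 + aE * x / lE))
        (((aB - aE) * x + lE * Real.log (1 + aE * x / lE)
          - lB * Real.log (1 + aB * x / lB)) / x ^ 2) x ∧
      0 < ((aB - aE) * x + lE * Real.log (1 + aE * x / lE)
          - lB * Real.log (1 + aB * x / lB)) / x ^ 2) ∧
    StrictMonoOn (fun x : ℝ => (aE - aB) + (aB + lB / x) * Real.log (1 + aB * x / lB)
      - (aE + lE / x) * Real.log (1 + aE * x / lE)) (Set.Ioi 0) := by
  have key (x : ℝ) (hx : 0 < x) :=
    And.intro
      (hasDerivAt_secrecy_rate (aB := aB) (aE := aE) hlB.ne' hlE.ne' hx.ne' (by positivity)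
        (by positivity))
      (div_pos (secrecy_numerator_pos haE hlB hlE hx h1 h2 hstrict) (pow_pos hx 2))
  refine ⟨key, strictMonoOn_of_deriv_pos (convex_Ioi 0)
    (fun x hx => (key x hx).1.continuousAt.continuousWithinAt) fun x hx => ?_⟩
  rw [interior_Ioi] at hx
  exact (key x hx).1.deriv ▸ (key x hx).2
end

section
/- Let α_B, α_E, λ_B, λ_E be positive reals with α_B = α_E and λ_E > λ_B. Define Φ(x) = (α_B + λ_B/x)·log(1 + α_B·x/λ_B) - (α_B + λ_E/x)·log(1 + α_B·x/λ_E) for x > 0. Then the limit of Φ(x) as x → ∞ equals α_B·log(λ_E/λ_B). -/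
open Real Filter Topology

/-! Each term is `α·log x + α·log (α/λ) + o(1)` at infinity, because `log(1 + αx/λ) - log x → log(α/λ)`
and `(λ/x)·log(1 + αx/λ) → 0`; the `α·log x` parts cancel in the difference. -/

theorem tendsto_add_mul_div_add_mul_atTop (a b p : ℝ) {q : ℝ} (hq : q ≠ 0) :
    Tendsto (fun x : ℝ => (a + p * x) / (b + q * x)) atTop (𝓝 (p / q)) := by
  have h : Tendsto (fun x : ℝ => (a * x⁻¹ + p) / (b * x⁻¹ + q)) atTop
      (𝓝 ((a * 0 + p) / (b * 0 + q))) :=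
    ((tendsto_inv_atTop_zero.const_mul a).add_const p).div
      ((tendsto_inv_atTop_zero.const_mul b).add_const q) (by simpa using hq)
  rw [mul_zero, mul_zero, zero_add, zero_add] at h
  refine h.congr' ?_
  filter_upwards [eventually_gt_atTop 0] with x hx
  rw [← mul_div_mul_right _ _ hx.ne']
  field_simp

theorem tendsto_log_one_add_mul_div_atTop {c : ℝ} (hc : 0 < c) :
    Tendsto (fun x : ℝ => log (1 + c * x) / x) atTop (𝓝 0) := by
  have hu : Tendsto (fun x : ℝ => 1 + c * x) atTop atTop :=
    tendsto_atTop_add_const_left _ 1 (tendsto_id.const_mul_atTop hc)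
  have hlog : Tendsto (fun x : ℝ => log (1 + c * x) / (1 + c * x)) atTop (𝓝 0) :=
    isLittleO_log_id_atTop.tendsto_div_nhds_zero.comp hu
  have hlin := tendsto_add_mul_div_add_mul_atTop 1 0 c one_ne_zero
  simp only [zero_add, one_mul, div_one] at hlin
  rw [← zero_mul c]
  refine (hlog.mul hlin).congr' ?_
  filter_upwards [eventually_gt_atTop 0] with x hx
  have : 0 < 1 + c * x := by positivity
  field_simp

theorem tendsto_add_div_mul_log_one_add_sub_mul_log_atTop {a l : ℝ} (ha : 0 < a) (hl : 0 < l) :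
    Tendsto (fun x : ℝ => (a + l / x) * log (1 + a * x / l) - a * log x) atTop
      (𝓝 (a * log (a / l))) := by
  have hratio := tendsto_add_mul_div_add_mul_atTop 1 0 (a / l) one_ne_zero
  simp only [zero_add, one_mul, div_one] at hratio
  have hsmall := tendsto_log_one_add_mul_div_atTop (div_pos ha hl)
  rw [← add_zero (a * log (a / l)), ← mul_zero l]
  refine (((hratio.log (by positivity)).const_mul a).add (hsmall.const_mul l)).congr' ?_
  filter_upwards [eventually_gt_atTop 0] with x hx
  have hpos : 0 < 1 + a / l * x := by positivity
  rw [log_div hpos.ne' hx.ne', div_mul_eq_mul_div]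
  ring

theorem stmt2_general (aB lB lE : ℝ) (haB : 0 < aB) (hlB : 0 < lB) (hlE : 0 < lE) :
    Filter.Tendsto (fun x : ℝ =>
        (aB + lB / x) * Real.log (1 + aB * x / lB)
          - (aB + lE / x) * Real.log (1 + aB * x / lE))
      Filter.atTop (nhds (aB * Real.log (lE / lB))) := by
  have h := (tendsto_add_div_mul_log_one_add_sub_mul_log_atTop haB hlB).sub
    (tendsto_add_div_mul_log_one_add_sub_mul_log_atTop haB hlE)
  have hlim : aB * log (aB / lB) - aB * log (aB / lE) = aB * log (lE / lB) := by
    rw [← mul_sub, ← log_div (by positivity) (by positivity)]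
    congr 2
    field_simp
  rw [hlim] at h
  exact h.congr fun x => by ring

/-- with equal channel gains α_B = α_E and λ_E > λ_B,
Φ(x) → α_B·log(λ_E/λ_B) as x → ∞. -/
theorem stmt2 (aB aE lB lE : ℝ) (haB : 0 < aB) (hlB : 0 < lB) (hlE : 0 < lE)
    (heq : aB = aE) (hlt : lB < lE) :
    Filter.Tendsto (fun x : ℝ =>
        (aB + lB / x) * Real.log (1 + aB * x / lB)
          - (aB + lE / x) * Real.log (1 + aB * x / lE))
      Filter.atTop (nhds (aB * Real.log (lE / lB))) :=
  stmt2_general aB lB lE haB hlB hlE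
end

section
/- Let α_B, α_E, λ_B, λ_E > 0 with α_B = α_E and λ_E/α_E > λ_B/α_B, and set λ_D = λ_E - λ_B > 0. Define ψ(x) = (α_E·x + λ_E)·log((α_B·x + λ_B)/(α_E·x + λ_E)) for x ≥ 0. Then ψ is strictly increasing on [0,∞) and lim_{x→∞} ψ(x) = -λ_D; in particular ψ(x) ≤ -λ_D for all x ≥ 0. -/
/-!
With `a = α_B = α_E` and `d = λ_E - λ_B`, `ψ(x) = φ(a x + λ_E)` for `φ(u) = u log ((u - d) / u)`.
On `u > d` the derivative `φ'(u) = log ((u - d) / u) + d / (u - d)` is positive by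
`log t < t - 1` at `t = u / (u - d)`, and
`φ(u) = u log (1 - d / u) → -d`; a monotone function stays below its limit at infinity.
-/

open Real Set Filter

theorem MonotoneOn.le_of_tendsto_atTop {α β : Type*} [TopologicalSpace α] [Preorder α]
    [OrderClosedTopology α] [Preorder β] [IsDirectedOrder β] {f : β → α} {a : α} {b : β}
    (hf : MonotoneOn f (Ici b)) (ha : Tendsto f atTop (nhds a)) : f b ≤ a :=
  haveI : Nonempty β := ⟨b⟩
  ge_of_tendsto ha ((eventually_ge_atTop b).mono fun _ hx => hf self_mem_Ici hx hx)

theorem tendsto_mul_log_sub_div_self_atTop (d : ℝ) :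
    Tendsto (fun u : ℝ => u * log ((u - d) / u)) atTop (nhds (-d)) := by
  refine (tendsto_mul_log_one_add_div_atTop (-d)).congr' ?_
  filter_upwards [eventually_gt_atTop 0] with u hu
  rw [sub_div, div_self hu.ne', neg_div, sub_eq_add_neg]

theorem strictMonoOn_mul_log_sub_div_self {d : ℝ} (hd : 0 < d) :
    StrictMonoOn (fun u : ℝ => u * log ((u - d) / u)) (Ioi d) := by
  have hderiv : ∀ u ∈ Ioi d, HasDerivAt (fun u : ℝ => u * log ((u - d) / u))
      (log ((u - d) / u) + d / (u - d)) u := by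
    intro u (hu : d < u)
    have hu₀ : 0 < u := hd.trans hu
    have hud : 0 < u - d := sub_pos.2 hu
    refine ((hasDerivAt_id' u).fun_mul
      ((((hasDerivAt_id' u).sub_const d).fun_div (hasDerivAt_id' u) hu₀.ne').log
        (div_pos hud hu₀).ne')).congr_deriv ?_
    field_simp
    ring
  refine strictMonoOn_of_deriv_pos (convex_Ioi d)
    (fun u hu => (hderiv u hu).continuousAt.continuousWithinAt) fun u hu => ?_
  rw [interior_Ioi] at hu
  have hud : 0 < u - d := sub_pos.2 hu
  have hu₀ : 0 < u := hd.trans hu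
  have hlog : log (u / (u - d)) < u / (u - d) - 1 :=
    log_lt_sub_one_of_pos (div_pos hu₀ hud) (by
      rw [Ne, div_eq_one_iff_eq hud.ne']; linarith)
  have hsub : u / (u - d) - 1 = d / (u - d) := by field_simp; ring
  rw [(hderiv u hu).deriv, ← neg_neg (log _), ← log_inv, inv_div]
  linarith

theorem stmt3_general (aB aE lB lE : ℝ) (haB : 0 < aB) (hlB : 0 < lB)
    (heq : aB = aE) (hdeg : lB / aB < lE / aE) :
    StrictMonoOn (fun x : ℝ => (aE * x + lE) * Real.log ((aB * x + lB) / (aE * x + lE)))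
      (Set.Ici 0) ∧
    Filter.Tendsto (fun x : ℝ => (aE * x + lE) * Real.log ((aB * x + lB) / (aE * x + lE)))
      Filter.atTop (nhds (-(lE - lB))) ∧
    ∀ x : ℝ, 0 ≤ x →
      (aE * x + lE) * Real.log ((aB * x + lB) / (aE * x + lE)) ≤ -(lE - lB) := by
  subst heq
  have hd : 0 < lE - lB := sub_pos.2 ((div_lt_div_iff_of_pos_right haB).1 hdeg)
  set ψ : ℝ → ℝ := fun x => (aB * x + lE) * log ((aB * x + lB) / (aB * x + lE))
  have hψ : ψ = (fun u => u * log ((u - (lE - lB)) / u)) ∘ (fun x => aB * x + lE) := by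
    funext x
    simp only [ψ, Function.comp]
    ring_nf
  have hmono : StrictMonoOn ψ (Ici 0) := by
    rw [hψ]
    refine (strictMonoOn_mul_log_sub_div_self hd).comp
      (((strictMono_mul_left_of_pos haB).add_const lE).strictMonoOn _) fun x (hx : 0 ≤ x) => ?_
    show lE - lB < aB * x + lE
    linarith [mul_nonneg haB.le hx]
  have hlim : Tendsto ψ atTop (nhds (-(lE - lB))) := by
    rw [hψ]
    exact (tendsto_mul_log_sub_div_self_atTop _).comp
      (tendsto_atTop_add_const_right _ _ (tendsto_id.const_mul_atTop haB))
  exact ⟨hmono, hlim, fun x hx =>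
    (hmono.monotoneOn.mono (Ici_subset_Ici.2 hx)).le_of_tendsto_atTop hlim⟩

/-- ψ(x) = (α_E x + λ_E)·log((α_B x + λ_B)/(α_E x + λ_E)) is strictly
increasing on [0,∞), tends to -λ_D as x → ∞, and ψ(x) ≤ -λ_D for all x ≥ 0,
where λ_D = λ_E - λ_B > 0 and α_B = α_E. -/
theorem stmt3 (aB aE lB lE : ℝ) (haB : 0 < aB) (haE : 0 < aE) (hlB : 0 < lB)
    (hlE : 0 < lE) (heq : aB = aE) (hdeg : lB / aB < lE / aE) :
    StrictMonoOn (fun x : ℝ => (aE * x + lE) * Real.log ((aB * x + lB) / (aE * x + lE)))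
      (Set.Ici 0) ∧
    Filter.Tendsto (fun x : ℝ => (aE * x + lE) * Real.log ((aB * x + lB) / (aE * x + lE)))
      Filter.atTop (nhds (-(lE - lB))) ∧
    ∀ x : ℝ, 0 ≤ x →
      (aE * x + lE) * Real.log ((aB * x + lB) / (aE * x + lE)) ≤ -(lE - lB) :=
  stmt3_general aB aE lB lE haB hlB heq hdeg
end
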